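/- arXiv:2410.00498 — 3 statements merged into one kernel-verified Lean document; each statement's English description precedes it below -/
import Mathlib

section
/- If γ > 0 and the constants c = 1/2 + π/(4γ) and A satisfy A² = 2c(1 − 1/γ − c), then the function x(t) = c + A sin(πt/2) satisfies the renewal equation x(t) = (γ/2) ∫_{t−3}^{t−1} x(s)(1 − x(s)) ds for all real t. -/
/-!
Writing `x = c + A sin θ` with `θ = π s / 2`, the nonlinearity `x (1 - x)` is a constant plus
`A (1 - 2c) sin θ` plus a multiple of `cos 2θ = cos (π s)`. Over the window `[t - 3, t - 1]`,
a half period of `sin θ` and a full period of `cos 2θ`, the last term integrates to zero and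
the middle one to a multiple of `sin (π t / 2)`. The two constraints on `c` and `A` are exactly
what makes the resulting constant and coefficient match those of `x t`.
-/

open Real intervalIntegral

lemma logistic_add_mul_sin (c A θ : ℝ) :
    (c + A * sin θ) * (1 - (c + A * sin θ)) =
      (c * (1 - c) - A ^ 2 / 2) + A * (1 - 2 * c) * sin θ + A ^ 2 / 2 * cos (2 * θ) := by
  rw [cos_two_mul, cos_sq']
  ring

lemma hasDerivAt_logistic_add_mul_sin_antideriv (c A ω s : ℝ) (hω : ω ≠ 0) :
    HasDerivAt
      (fun s => (c * (1 - c) - A ^ 2 / 2) * s - A * (1 - 2 * c) / ω * cos (ω * s)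
        + A ^ 2 / (4 * ω) * sin (2 * ω * s))
      ((c + A * sin (ω * s)) * (1 - (c + A * sin (ω * s)))) s := by
  have hcos := ((hasDerivAt_id s).const_mul ω).cos
  have hsin := ((hasDerivAt_id s).const_mul (2 * ω)).sin
  refine ((((hasDerivAt_id s).const_mul (c * (1 - c) - A ^ 2 / 2)).sub
    (hcos.const_mul (A * (1 - 2 * c) / ω))).add (hsin.const_mul (A ^ 2 / (4 * ω)))).congr_deriv ?_
  rw [logistic_add_mul_sin, ← mul_assoc, id]
  field_simp
  ring

/-- Over half a period of `sin (ω s)`, `cos (ω s)` changes sign and `sin (2 ω s)` returns to its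
value, so only the linear and the `cos` part of the antiderivative contribute. -/
lemma integral_logistic_add_mul_sin_of_half_period (c A ω a b : ℝ) (hω : ω ≠ 0)
    (hab : ω * (b - a) = π) :
    ∫ s in a..b, (c + A * sin (ω * s)) * (1 - (c + A * sin (ω * s))) =
      (c * (1 - c) - A ^ 2 / 2) * (b - a) - 2 * A * (1 - 2 * c) / ω * cos (ω * b) := by
  have ha : ω * a = ω * b - π := by linarith
  rw [integral_eq_sub_of_hasDerivAt
    (fun s _ => hasDerivAt_logistic_add_mul_sin_antideriv c A ω s hω)
    (Continuous.intervalIntegrable (by fun_prop) a b)]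
  have hsin : sin (2 * ω * a) = sin (2 * ω * b) := by
    rw [mul_assoc, ha, mul_sub, sin_sub_two_pi, mul_assoc]
  simp only [ha, hsin, cos_sub_pi]
  ring

/-- If `γ > 0`, `c = 1/2 + π/(4γ)` and `A² = 2c(1 − 1/γ − c)`, then
`x(t) = c + A sin(πt/2)` satisfies the renewal equation
`x(t) = (γ/2) ∫_{t−3}^{t−1} x(s)(1 − x(s)) ds` for all real `t`. -/
theorem stmt_1 (γ c A : ℝ) (hγ : 0 < γ)
    (hc : c = 1 / 2 + Real.pi / (4 * γ))
    (hA : A ^ 2 = 2 * c * (1 - 1 / γ - c))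
    (x : ℝ → ℝ) (hx : ∀ t, x t = c + A * Real.sin (Real.pi * t / 2)) :
    ∀ t : ℝ, x t = (γ / 2) * ∫ s in (t - 3)..(t - 1), x s * (1 - x s) := by
  intro t
  have hx' : x = fun s => c + A * sin (π / 2 * s) := by
    funext s
    rw [hx, mul_div_right_comm]
  have hhalf : π / 2 * ((t - 1) - (t - 3)) = π := by ring
  rw [hx', integral_logistic_add_mul_sin_of_half_period c A _ _ _ (by positivity) hhalf,
    show π / 2 * (t - 1) = π / 2 * t - π / 2 by ring, cos_sub_pi_div_two]
  beta_reduce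
  have hγ' : γ ≠ 0 := hγ.ne'
  have hlin : γ * (1 - 2 * c) = -(π / 2) := by
    rw [hc]
    field_simp
    ring
  have hconst : γ * (c * (1 - c) - A ^ 2 / 2) = c := by
    rw [hA]
    field_simp
    ring
  calc c + A * sin (π / 2 * t)
      = γ * (c * (1 - c) - A ^ 2 / 2) - 2 * A * sin (π / 2 * t) / π * (γ * (1 - 2 * c)) := by
        rw [hconst, hlin]
        field_simp
        ring
    _ = _ := by ring
end

section
/- For the sun-star extension of the DDE shift semigroup, the phi-functions are explicit: for h > 0 ≤ τ and k ≥ 1, the weak-star integral ∫₀^h 𝒯₀(h−s)(s^{k−1}/(k−1)!; 0) ds equals the pair (h^k/k!; θ ↦ (max(0, h+θ))^k / k!) for θ ∈ [−τ,0]. -/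
/-! The semigroup `T (h - s)` copies the scalar part onto `θ ≥ -(h - s)` and shifts the zero
history elsewhere, so at `θ` the integrand is `s ^ (k-1) / (k-1)!` cut off at `s = h + θ`;
integrating the truncated power gives `max 0 (h + θ) ^ k / k!`. -/

open Real intervalIntegral
open scoped Nat

theorem integral_pow_div_factorial (m : ℕ) (a : ℝ) :
    ∫ s in (0:ℝ)..a, s ^ m / (m ! : ℝ) = a ^ (m + 1) / ((m + 1) ! : ℝ) := by
  rw [integral_div, integral_pow, Nat.factorial_succ]
  push_cast
  field_simp
  ring

theorem integral_indicator_Iic_eq_integral_max (f : ℝ → ℝ) {c h : ℝ} (h0 : 0 ≤ h) (hc : c ≤ h) :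
    ∫ s in (0:ℝ)..h, (Set.Iic c).indicator f s = ∫ s in (0:ℝ)..max 0 c, f s := by
  rcases le_or_gt 0 c with hc0 | hc0
  · rw [max_eq_right hc0]
    exact integral_indicator ⟨hc0, hc⟩
  · rw [max_eq_left hc0.le, integral_same]
    refine (integral_congr_ae ?_).trans integral_zero
    filter_upwards with s hs
    rw [Set.uIoc_of_le h0] at hs
    exact Set.indicator_of_notMem (s := Set.Iic c)
      (fun hsc => by linarith [hs.1, Set.mem_Iic.mp hsc]) f

theorem stmt_10_general (τ h : ℝ) (hh : 0 < h)
    (k : ℕ) (hk : 1 ≤ k)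
    (T : ℝ → ℝ × (ℝ → ℝ) → ℝ × (ℝ → ℝ))
    (hT1 : ∀ t p, (T t p).1 = p.1)
    (hT2 : ∀ t p θ, (T t p).2 θ = if -t ≤ θ then p.1 else p.2 (t + θ)) :
    (∫ s in (0:ℝ)..h,
        (T (h - s) (s ^ (k - 1) / (Nat.factorial (k - 1) : ℝ), fun _ => 0)).1)
      = h ^ k / (Nat.factorial k : ℝ) ∧
    ∀ θ ∈ Set.Icc (-τ) (0:ℝ),
      (∫ s in (0:ℝ)..h,
          (T (h - s) (s ^ (k - 1) / (Nat.factorial (k - 1) : ℝ), fun _ => 0)).2 θ)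
        = (max 0 (h + θ)) ^ k / (Nat.factorial k : ℝ) := by
  obtain ⟨m, rfl⟩ : ∃ m, k = m + 1 := ⟨k - 1, (Nat.sub_add_cancel hk).symm⟩
  simp only [Nat.add_sub_cancel]
  refine ⟨by simpa only [hT1] using integral_pow_div_factorial m h, fun θ hθ => ?_⟩
  have hshift : ∀ s, (T (h - s) (s ^ m / (m ! : ℝ), fun _ => 0)).2 θ
      = (Set.Iic (h + θ)).indicator (fun s => s ^ m / (m ! : ℝ)) s := fun s => by
    simp only [hT2, neg_sub, sub_le_iff_le_add', Set.indicator_apply, Set.mem_Iic]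
  simp only [hshift]
  rw [integral_indicator_Iic_eq_integral_max _ hh.le (by linarith [hθ.2]),
    integral_pow_div_factorial]

/-- For the sun-star extension of the DDE shift semigroup, the weak-star integral
`∫₀^h 𝒯₀(h−s)(s^{k−1}/(k−1)!; 0) ds` equals the pair
`(h^k/k!; θ ↦ max(0,h+θ)^k/k!)` on `[−τ,0]`. -/
theorem stmt_10 (τ h : ℝ) (hτ : 0 < τ) (hh : 0 < h) (hhτ : h ≤ τ)
    (k : ℕ) (hk : 1 ≤ k)
    (T : ℝ → ℝ × (ℝ → ℝ) → ℝ × (ℝ → ℝ))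
    (hT1 : ∀ t p, (T t p).1 = p.1)
    (hT2 : ∀ t p θ, (T t p).2 θ = if -t ≤ θ then p.1 else p.2 (t + θ)) :
    (∫ s in (0:ℝ)..h,
        (T (h - s) (s ^ (k - 1) / (Nat.factorial (k - 1) : ℝ), fun _ => 0)).1)
      = h ^ k / (Nat.factorial k : ℝ) ∧
    ∀ θ ∈ Set.Icc (-τ) (0:ℝ),
      (∫ s in (0:ℝ)..h,
          (T (h - s) (s ^ (k - 1) / (Nat.factorial (k - 1) : ℝ), fun _ => 0)).2 θ)
        = (max 0 (h + θ)) ^ k / (Nat.factorial k : ℝ) :=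
  stmt_10_general τ h hh k hk T hT1 hT2
end

section
/- For the DDE-type semigroup, the identity ∫₀^h 𝒯₀(h−s)(f(s); 0) ds = (∫₀^h f(s) ds ; θ ↦ ∫₀^{max(0,h+θ)} f(s) ds) holds for any continuous f : [0,h] → ℝ^d and 0 < h ≤ τ. -/
open Real intervalIntegral

/-- For the DDE-type sun-star semigroup, for continuous `f : [0,h] → ℝ^d` and
`0 < h ≤ τ`, `∫₀^h 𝒯₀(h−s)(f(s);0) ds = (∫₀^h f(s) ds; θ ↦ ∫₀^{max(0,h+θ)} f(s) ds)`. -/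
theorem stmt_14 (d : ℕ) (hd : 0 < d) (τ h : ℝ) (hτ : 0 < τ) (hh : 0 < h) (hhτ : h ≤ τ)
    (f : ℝ → Fin d → ℝ) (hf : ContinuousOn f (Set.Icc 0 h))
    (T : ℝ → (Fin d → ℝ) × (ℝ → Fin d → ℝ) → (Fin d → ℝ) × (ℝ → Fin d → ℝ))
    (hT1 : ∀ t p, (T t p).1 = p.1)
    (hT2 : ∀ t p θ, (T t p).2 θ = if -t ≤ θ then p.1 else p.2 (t + θ)) :
    (∫ s in (0:ℝ)..h, (T (h - s) (f s, fun _ => 0)).1) = (∫ s in (0:ℝ)..h, f s) ∧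
    ∀ θ ∈ Set.Icc (-τ) (0:ℝ),
      (∫ s in (0:ℝ)..h, (T (h - s) (f s, fun _ => 0)).2 θ)
        = ∫ s in (0:ℝ)..(max 0 (h + θ)), f s := by
  constructor
  · simp [hT1]
  · intro θ hθ
    have key : (fun s => (T (h - s) (f s, fun _ => 0)).2 θ)
        = Set.indicator {x : ℝ | x ≤ h + θ} f := by
      funext s
      rw [hT2]
      by_cases hs : s ≤ h + θ
      · rw [if_pos (by linarith), Set.indicator_of_mem (show s ∈ {x : ℝ | x ≤ h + θ} from hs)]
      · rw [if_neg (by simp only [neg_sub]; intro hc; exact hs (by linarith)),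
          Set.indicator_of_notMem (show s ∉ {x : ℝ | x ≤ h + θ} from hs)]
      
    rw [key]
    by_cases hc : 0 ≤ h + θ
    · rw [max_eq_right hc]
      exact integral_indicator ⟨hc, by linarith [hθ.2]⟩
    · rw [max_eq_left (by linarith)]
      rw [integral_same]
      apply integral_zero_ae
      filter_upwards with x hx
      have hx0 : 0 < x := by
        rcases Set.mem_uIoc.mp hx with ⟨h1, _⟩ | ⟨_, h2⟩
        · exact h1
        · linarith
      exact Set.indicator_of_notMem (by simp; linarith) f
end
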